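/- arXiv:1907.03439 — 2 statements merged into one kernel-verified Lean document; each statement's English description precedes it below -/
import Mathlib

section
/- Let A = (A_1,…,A_n) be a nonnegative vector in ℝ^n and D = n + A_1 + ⋯ + A_n. Then for every α > 0 and t > 0, ∫_{ℝ^n_A} e^{−t|x|^α} |x|^α x^A dx = (D/α) · t^{−D/α − 1} · ( Γ(D/α + 1)/Γ(D/2 + 1) ) · Π(A)^{D/2}. -/
open MeasureTheory Real Filter

noncomputable section

/-- The positivity region `ℝ^n_A = {x : x_i > 0 whenever A_i > 0}`. -/
def monSet {ι : Type*} [Fintype ι] (A : ι → ℝ) : Set (EuclideanSpace ℝ ι) :=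
  {x | ∀ i, 0 < A i → 0 < x i}

/-- The monomial weight `x^A = ∏ |x_i|^{A_i}`. -/
def monWeight {ι : Type*} [Fintype ι] (A : ι → ℝ) (x : EuclideanSpace ℝ ι) : ℝ :=
  ∏ i, |x i| ^ A i

/-- The homogeneous dimension `D = n + A_1 + ⋯ + A_n`. -/
def monDim {ι : Type*} [Fintype ι] (A : ι → ℝ) : ℝ :=
  (Fintype.card ι : ℝ) + ∑ i, A i

/-- `k = #{i : A_i > 0}`. -/
def monK {ι : Type*} [Fintype ι] (A : ι → ℝ) : ℕ :=
  Nat.card {i : ι // 0 < A i}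

/-- `Π(A) = [ (∏ Γ((A_i+1)/2)) / 2^k ]^{2/D}`. -/
def monPi {ι : Type*} [Fintype ι] (A : ι → ℝ) : ℝ :=
  ((∏ i, Gamma ((A i + 1) / 2)) / 2 ^ monK A) ^ (2 / monDim A)

/-!
Polar coordinates. The weight `1_{ℝ^n_A}(x) x^A` is positively homogeneous of degree `D - n`,
so against it every radial function `f(|x|)` integrates to `c_A ∫₀^∞ f(r) r^(D-1) dr`, where `c_A`
is the integral of the weight over the unit sphere. For the Gaussian `f(r) = e^(-r²)` the integral
splits over the coordinates into one-dimensional Gamma integrals, giving `Π(A)^(D/2)` and hence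
`c_A`; for `f(r) = e^(-t r^α) r^α` the radial integral is again a Gamma integral.
-/

open Set Metric Module

theorem integral_fun_norm_mul_of_homogeneous {E : Type*} [NormedAddCommGroup E]
    [NormedSpace ℝ E] [MeasurableSpace E] [BorelSpace E] [FiniteDimensional ℝ E]
    [Nontrivial E] (μ : Measure E) [μ.IsAddHaarMeasure] {g : E → ℝ} {a : ℝ}
    (hg : ∀ r : ℝ, 0 < r → ∀ x, g (r • x) = r ^ a * g x) (f : ℝ → ℝ) :
    ∫ x, f ‖x‖ * g x ∂μ =
      (∫ θ : sphere (0 : E) 1, g θ ∂μ.toSphere) *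
        ∫ r in Ioi (0 : ℝ), r ^ (finrank ℝ E - 1) * r ^ a * f r := by
  calc ∫ x, f ‖x‖ * g x ∂μ
      = ∫ x : ({0}ᶜ : Set E), f ‖x.1‖ * g x.1 ∂(μ.comap (↑)) := by
        rw [integral_subtype_comap (measurableSet_singleton _).compl fun x ↦ f ‖x‖ * g x,
          restrict_compl_singleton]
    _ = ∫ p, g p.1 * (p.2.1 ^ a * f p.2) ∂μ.toSphere.prod (.volumeIoiPow (finrank ℝ E - 1)) := by
        rw [← μ.measurePreserving_homeomorphUnitSphereProd.integral_comp
          (Homeomorph.measurableEmbedding _)]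
        refine integral_congr_ae (Eventually.of_forall fun x => ?_)
        have hx : 0 < ‖x.1‖ := norm_pos_iff.2 x.2
        have hgx := hg _ hx (‖x.1‖⁻¹ • x.1)
        rw [smul_inv_smul₀ hx.ne'] at hgx
        simp only [homeomorphUnitSphereProd_apply_snd_coe,
          homeomorphUnitSphereProd_apply_fst_coe, hgx]
        ring
    _ = (∫ θ : sphere (0 : E) 1, g θ ∂μ.toSphere) *
          ∫ r : Ioi (0 : ℝ), r.1 ^ a * f r ∂.volumeIoiPow (finrank ℝ E - 1) :=
        integral_prod_mul (L := ℝ) (fun θ : sphere (0 : E) 1 => g θ)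
          fun r : Ioi (0 : ℝ) => r.1 ^ a * f r
    _ = _ := by
        congr 1
        simp only [Measure.volumeIoiPow, ENNReal.ofReal]
        rw [integral_withDensity_eq_integral_smul
            (measurable_subtype_coe.pow_const _).real_toNNReal,
          integral_subtype_comap measurableSet_Ioi
            fun r ↦ Real.toNNReal (r ^ (finrank ℝ E - 1)) • (r ^ a * f r)]
        refine setIntegral_congr_fun measurableSet_Ioi fun r hr ↦ ?_
        rw [NNReal.smul_def, Real.coe_toNNReal _ (pow_nonneg (le_of_lt hr) _), smul_eq_mul,
          mul_assoc]

lemma integral_Ioi_rpow_mul_exp_neg_sq {a : ℝ} (ha : -1 < a) :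
    ∫ u in Ioi 0, u ^ a * exp (-u ^ 2) = Gamma ((a + 1) / 2) / 2 := by
  have h := integral_rpow_mul_exp_neg_rpow two_pos ha
  simp only [Real.rpow_two] at h
  rw [h]
  ring

lemma integral_abs_rpow_mul_exp_neg_sq {a : ℝ} (ha : -1 < a) :
    ∫ u, |u| ^ a * exp (-u ^ 2) = Gamma ((a + 1) / 2) := by
  have h := integral_comp_abs (f := fun u => u ^ a * exp (-u ^ 2))
  simp only [sq_abs] at h
  rw [h, integral_Ioi_rpow_mul_exp_neg_sq ha]
  ring

lemma integral_Ioi_rpow_mul_exp_neg_mul_rpow_mul_rpow {D α t : ℝ} (hD : 0 < D) (hα : 0 < α)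
    (ht : 0 < t) :
    ∫ r in Ioi 0, r ^ (D - 1) * (exp (-(t * r ^ α)) * r ^ α) =
      t ^ (-(D / α) - 1) * (1 / α) * Gamma (D / α + 1) := by
  have hexp : (D - 1 + α + 1) / α = D / α + 1 := by field_simp; ring
  calc _ = ∫ r in Ioi 0, r ^ (D - 1 + α) * exp (-t * r ^ α) :=
        setIntegral_congr_fun measurableSet_Ioi fun r (hr : 0 < r) => by
          rw [Real.rpow_add hr, neg_mul]
          ring
    _ = _ := by
        rw [integral_rpow_mul_exp_neg_mul_rpow hα (by linarith) ht, neg_div, hexp, neg_add']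

section Monomial

variable {ι : Type*} [Fintype ι] (A : ι → ℝ)

lemma monDim_pos [Nonempty ι] (hA : ∀ i, 0 ≤ A i) : 0 < monDim A :=
  add_pos_of_pos_of_nonneg (by exact_mod_cast Fintype.card_pos)
    (Finset.sum_nonneg fun i _ => hA i)

lemma monSet_eq_preimage_pi :
    monSet A = WithLp.ofLp ⁻¹' univ.pi fun i => {u : ℝ | 0 < A i → 0 < u} := by
  ext x
  simp [monSet]

lemma measurableSet_monSet : MeasurableSet (monSet A) := by
  rw [monSet_eq_preimage_pi]
  refine (MeasurableSet.univ_pi fun i => ?_).preimage (PiLp.volume_preserving_ofLp ι).measurable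
  by_cases h : 0 < A i
  · simp only [h, true_implies]
    exact measurableSet_Ioi
  · simp [h]

lemma smul_mem_monSet_iff {r : ℝ} (hr : 0 < r) {x : EuclideanSpace ℝ ι} :
    r • x ∈ monSet A ↔ x ∈ monSet A := by
  simp [monSet, mul_pos_iff_of_pos_left hr]

lemma monWeight_smul {r : ℝ} (hr : 0 < r) (x : EuclideanSpace ℝ ι) :
    monWeight A (r • x) = r ^ (∑ i, A i) * monWeight A x := by
  simp only [monWeight, PiLp.smul_apply, smul_eq_mul, abs_mul, abs_of_pos hr,
    Real.mul_rpow hr.le (abs_nonneg _), Finset.prod_mul_distrib, Real.rpow_sum_of_pos hr]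

lemma indicator_monSet_monWeight_smul {r : ℝ} (hr : 0 < r) (x : EuclideanSpace ℝ ι) :
    (monSet A).indicator (monWeight A) (r • x) =
      r ^ (∑ i, A i) * (monSet A).indicator (monWeight A) x := by
  by_cases hx : x ∈ monSet A
  · rw [indicator_of_mem ((smul_mem_monSet_iff A hr).2 hx), indicator_of_mem hx,
      monWeight_smul A hr]
  · rw [indicator_of_notMem (mt (smul_mem_monSet_iff A hr).1 hx), indicator_of_notMem hx,
      mul_zero]

lemma exp_neg_norm_sq_mul_monWeight (x : EuclideanSpace ℝ ι) :
    exp (-‖x‖ ^ 2) * monWeight A x = ∏ i, |x i| ^ A i * exp (-x i ^ 2) := by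
  rw [EuclideanSpace.norm_sq_eq, Finset.prod_mul_distrib, ← Real.exp_sum, monWeight, mul_comm]
  simp [Finset.sum_neg_distrib]

lemma setIntegral_abs_rpow_mul_exp_neg_sq {a : ℝ} (ha : -1 < a) :
    ∫ u in {u : ℝ | 0 < a → 0 < u}, |u| ^ a * exp (-u ^ 2) =
      Gamma ((a + 1) / 2) * if 0 < a then 2⁻¹ else 1 := by
  by_cases h : 0 < a
  · simp only [h, true_implies, if_true]
    rw [← div_eq_mul_inv, ← integral_Ioi_rpow_mul_exp_neg_sq ha]
    exact setIntegral_congr_fun measurableSet_Ioi fun u hu => by rw [abs_of_pos hu]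
  · simp [h, integral_abs_rpow_mul_exp_neg_sq ha]

lemma prod_gamma_mul_ite_eq_div_pow_monK :
    (∏ i, Gamma ((A i + 1) / 2) * if 0 < A i then (2 : ℝ)⁻¹ else 1) =
      (∏ i, Gamma ((A i + 1) / 2)) / 2 ^ monK A := by
  classical
  rw [Finset.prod_mul_distrib, Finset.prod_ite, Finset.prod_const, Finset.prod_const_one,
    mul_one, inv_pow, div_eq_mul_inv, monK, Nat.card_eq_fintype_card, Fintype.card_subtype]

lemma setIntegral_monSet_exp_neg_norm_sq_mul_monWeight (hA : ∀ i, -1 < A i) :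
    ∫ x in monSet A, exp (-‖x‖ ^ 2) * monWeight A x =
      (∏ i, Gamma ((A i + 1) / 2)) / 2 ^ monK A := by
  simp_rw [exp_neg_norm_sq_mul_monWeight, monSet_eq_preimage_pi]
  rw [(PiLp.volume_preserving_ofLp ι).setIntegral_preimage_emb
      (MeasurableEquiv.toLp 2 (ι → ℝ)).symm.measurableEmbedding
      (fun y : ι → ℝ => ∏ i, |y i| ^ A i * exp (-y i ^ 2)),
    volume_pi, Measure.restrict_pi_pi, integral_fintype_prod_eq_prod
      (fun i u => |u| ^ A i * exp (-u ^ 2))]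
  simp_rw [setIntegral_abs_rpow_mul_exp_neg_sq (hA _)]
  exact prod_gamma_mul_ite_eq_div_pow_monK A

def monSphereIntegral : ℝ :=
  ∫ θ : sphere (0 : EuclideanSpace ℝ ι) 1, (monSet A).indicator (monWeight A) θ ∂volume.toSphere

lemma setIntegral_monSet_fun_norm_mul_monWeight [Nonempty ι] (f : ℝ → ℝ) :
    ∫ x in monSet A, f ‖x‖ * monWeight A x =
      monSphereIntegral A * ∫ r in Ioi 0, r ^ (monDim A - 1) * f r := by
  simp_rw [← integral_indicator (measurableSet_monSet A), indicator_mul_right]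
  rw [integral_fun_norm_mul_of_homogeneous volume
    (fun r hr x => indicator_monSet_monWeight_smul A hr x), monSphereIntegral]
  congr 1
  refine setIntegral_congr_fun measurableSet_Ioi fun r (hr : 0 < r) => ?_
  rw [finrank_euclideanSpace, ← Real.rpow_natCast, Nat.cast_pred Fintype.card_pos,
    ← Real.rpow_add hr, monDim]
  ring_nf

lemma monPi_rpow_monDim_div_two (hA : ∀ i, -1 < A i) (hD : monDim A ≠ 0) :
    monPi A ^ (monDim A / 2) = (∏ i, Gamma ((A i + 1) / 2)) / 2 ^ monK A := by
  have hpos : 0 < (∏ i, Gamma ((A i + 1) / 2)) / 2 ^ monK A :=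
    div_pos (Finset.prod_pos fun i _ => Gamma_pos_of_pos (by linarith [hA i])) (by positivity)
  rw [monPi, ← Real.rpow_mul hpos.le, show 2 / monDim A * (monDim A / 2) = 1 by field_simp,
    Real.rpow_one]

end Monomial

/-- `∫_{ℝ^n_A} e^{-t|x|^α} |x|^α x^A dx
   = (D/α) t^{-D/α-1} Γ(D/α+1)/Γ(D/2+1) · Π(A)^{D/2}`. -/
theorem integral_exp_rpow_mul_rpow_monomial_weight {n : ℕ} (hn : 0 < n) (A : Fin n → ℝ)
    (hA : ∀ i, 0 ≤ A i) (α : ℝ) (hα : 0 < α) (t : ℝ) (ht : 0 < t) :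
    ∫ x in monSet A, exp (-(t * ‖x‖ ^ α)) * ‖x‖ ^ α * monWeight A x =
      monDim A / α * t ^ (-(monDim A / α) - 1) *
        (Gamma (monDim A / α + 1) / Gamma (monDim A / 2 + 1)) *
        monPi A ^ (monDim A / 2) := by
  have : Nonempty (Fin n) := ⟨⟨0, hn⟩⟩
  have hD := monDim_pos A hA
  have hA' : ∀ i, -1 < A i := fun i => by linarith [hA i]
  have hGauss := setIntegral_monSet_exp_neg_norm_sq_mul_monWeight A hA'
  rw [setIntegral_monSet_fun_norm_mul_monWeight A fun r => exp (-r ^ 2),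
    integral_Ioi_rpow_mul_exp_neg_sq (by linarith), sub_add_cancel] at hGauss
  rw [setIntegral_monSet_fun_norm_mul_monWeight A fun r => exp (-(t * r ^ α)) * r ^ α,
    integral_Ioi_rpow_mul_exp_neg_mul_rpow_mul_rpow (by linarith) hα ht,
    monPi_rpow_monDim_div_two A hA' hD.ne', ← hGauss,
    Gamma_add_one (s := monDim A / 2) (by linarith)]
  field_simp
end
end

section
/- Let A = (A_1,…,A_n) be a nonnegative vector in ℝ^n and D = n + A_1 + ⋯ + A_n. Then for every σ > 0 and every β > D/2, ∫_{ℝ^n_A} (1 + σ|x|^2)^{−β} x^A dx = (Π(A)/σ)^{D/2} · Γ(β − D/2)/Γ(β). -/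
open MeasureTheory Real Filter

noncomputable section

/-!
Subordination: `(1 + σ|x|²)^{-β} = Γ(β)⁻¹ ∫₀^∞ t^{β-1} e^{-t} e^{-tσ|x|²} dt`. After exchanging the
two integrals (Tonelli), the inner integral is a weighted Gaussian integral, which factors over the
coordinates into one-dimensional Gamma integrals and equals `Π(A)^{D/2} (tσ)^{-D/2}`; what remains
in `t` is the Gamma integral `Γ(β - D/2)`.
-/

lemma integrableOn_and_integral_exp_neg_mul_sq_mul_abs_rpow {a b : ℝ} (ha : 0 ≤ a) (hb : 0 < b) :
    IntegrableOn (fun t => exp (-b * t ^ 2) * |t| ^ a) {t | 0 < a → 0 < t} ∧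
      ∫ t in {t | 0 < a → 0 < t}, exp (-b * t ^ 2) * |t| ^ a =
        Gamma ((a + 1) / 2) * b ^ (-((a + 1) / 2)) / if 0 < a then 2 else 1 := by
  rcases ha.lt_or_eq with ha | rfl
  · have hset : {t : ℝ | 0 < a → 0 < t} = Set.Ioi 0 := by ext; simp [ha]
    have hcongr : Set.EqOn (fun t => exp (-b * t ^ 2) * |t| ^ a)
        (fun t => t ^ a * exp (-b * t ^ (2 : ℝ))) (Set.Ioi 0) := fun t ht => by
      simp only [abs_of_pos (Set.mem_Ioi.mp ht), rpow_two, mul_comm]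
    rw [hset, if_pos ha, integrableOn_congr_fun hcongr measurableSet_Ioi,
      setIntegral_congr_fun measurableSet_Ioi hcongr,
      integral_rpow_mul_exp_neg_mul_rpow two_pos (by linarith) hb]
    refine ⟨?_, by rw [neg_div]; ring⟩
    simpa only [rpow_two] using integrableOn_rpow_mul_exp_neg_mul_sq hb (by linarith)
  · simp only [lt_irrefl, false_imp_iff, Set.ofPred_true, rpow_zero, mul_one, if_false,
      integrableOn_univ, Measure.restrict_univ, integral_gaussian, zero_add, div_one,
      Gamma_one_half_eq]
    refine ⟨integrable_exp_neg_mul_sq hb, ?_⟩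
    rw [rpow_neg hb.le, ← sqrt_eq_rpow, sqrt_div pi_pos.le, div_eq_mul_inv]

lemma lintegral_Ioi_rpow_mul_exp_neg_mul {a r : ℝ} (ha : 0 < a) (hr : 0 < r) :
    ∫⁻ t in Set.Ioi 0, ENNReal.ofReal (t ^ (a - 1) * exp (-(r * t))) =
      ENNReal.ofReal (r ^ (-a) * Gamma a) := by
  have hint : IntegrableOn (fun t : ℝ => t ^ (a - 1) * exp (-(r * t))) (Set.Ioi 0) := by
    simpa only [rpow_one, neg_mul] using
      integrableOn_rpow_mul_exp_neg_mul_rpow (by linarith : -1 < a - 1) one_pos hr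
  rw [rpow_neg hr.le, ← inv_rpow hr.le, ← one_div, ← integral_rpow_mul_exp_neg_mul_Ioi ha hr,
    ofReal_integral_eq_lintegral_ofReal hint]
  filter_upwards [ae_restrict_mem measurableSet_Ioi] with t ht
  exact mul_nonneg (rpow_nonneg (le_of_lt ht) _) (exp_pos _).le

section Subordination

variable {X : Type*} [MeasurableSpace X] {μ : Measure X} [SFinite μ] {q w : X → ℝ} {K s β : ℝ}

lemma lintegral_one_add_rpow_neg_mul_of_lintegral_exp_neg_mul (hq : Measurable q)
    (hw : Measurable w) (hq0 : ∀ x, 0 ≤ q x) (hK : 0 ≤ K) (hβ : 0 < β) (hsβ : s < β)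
    (hexp : ∀ b > 0, ∫⁻ x, ENNReal.ofReal (exp (-b * q x) * w x) ∂μ =
      ENNReal.ofReal (K * b ^ (-s))) :
    ∫⁻ x, ENNReal.ofReal ((1 + q x) ^ (-β) * w x) ∂μ =
      ENNReal.ofReal (K * (Gamma (β - s) / Gamma β)) := by
  have hΓ : 0 < Gamma β := Gamma_pos_of_pos hβ
  set F : X → ℝ → ENNReal := fun x t =>
    ENNReal.ofReal (t ^ (β - 1) * exp (-((1 + q x) * t))) * ENNReal.ofReal (w x / Gamma β)
  have hsub : ∀ x, ENNReal.ofReal ((1 + q x) ^ (-β) * w x) = ∫⁻ t in Set.Ioi 0, F x t := by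
    intro x
    have hc : 0 < 1 + q x := by linarith [hq0 x]
    rw [lintegral_mul_const' _ _ ENNReal.ofReal_ne_top, lintegral_Ioi_rpow_mul_exp_neg_mul hβ hc,
      ← ENNReal.ofReal_mul (by positivity)]
    field_simp
  have hslice : ∀ t > 0, ∫⁻ x, F x t ∂μ =
      ENNReal.ofReal (K / Gamma β) * ENNReal.ofReal (t ^ (β - s - 1) * exp (-(1 * t))) := by
    intro t ht
    have hsplit : ∀ x, F x t = ENNReal.ofReal (t ^ (β - 1) * exp (-t) / Gamma β) *
        ENNReal.ofReal (exp (-t * q x) * w x) := fun x => by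
      simp only [F]
      rw [← ENNReal.ofReal_mul (by positivity), ← ENNReal.ofReal_mul (by positivity)]
      congr 1
      rw [show -((1 + q x) * t) = -t + -t * q x by ring, exp_add]
      ring
    rw [lintegral_congr fun x => hsplit x, lintegral_const_mul' _ _ ENNReal.ofReal_ne_top,
      hexp t ht, ← ENNReal.ofReal_mul (by positivity), ← ENNReal.ofReal_mul (by positivity)]
    congr 1
    rw [show β - s - 1 = (β - 1) + -s by ring, rpow_add ht, one_mul]
    ring
  calc ∫⁻ x, ENNReal.ofReal ((1 + q x) ^ (-β) * w x) ∂μ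
      = ∫⁻ t in Set.Ioi 0, ∫⁻ x, F x t ∂μ := by
        simp_rw [hsub]
        exact lintegral_lintegral_swap (by fun_prop)
    _ = ∫⁻ t in Set.Ioi 0, ENNReal.ofReal (K / Gamma β) *
          ENNReal.ofReal (t ^ (β - s - 1) * exp (-(1 * t))) :=
        setLIntegral_congr_fun measurableSet_Ioi hslice
    _ = ENNReal.ofReal (K * (Gamma (β - s) / Gamma β)) := by
        rw [lintegral_const_mul' _ _ ENNReal.ofReal_ne_top,
          lintegral_Ioi_rpow_mul_exp_neg_mul (by linarith) one_pos,
          ← ENNReal.ofReal_mul (by positivity), one_rpow, one_mul]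
        congr 1
        ring

theorem integral_one_add_rpow_neg_mul_of_integral_exp_neg_mul (hq : Measurable q)
    (hw : Measurable w) (hq0 : ∀ x, 0 ≤ q x) (hw0 : ∀ x, 0 ≤ w x) (hβ : 0 < β) (hsβ : s < β)
    (hint : ∀ b > 0, Integrable (fun x => exp (-b * q x) * w x) μ)
    (hval : ∀ b > 0, ∫ x, exp (-b * q x) * w x ∂μ = K * b ^ (-s)) :
    ∫ x, (1 + q x) ^ (-β) * w x ∂μ = K * (Gamma (β - s) / Gamma β) := by
  have hK : 0 ≤ K := by
    have := integral_nonneg (μ := μ) (f := fun x => exp (-1 * q x) * w x)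
      fun x => mul_nonneg (exp_pos _).le (hw0 x)
    rwa [hval 1 one_pos, one_rpow, mul_one] at this
  have hexp : ∀ b > 0, ∫⁻ x, ENNReal.ofReal (exp (-b * q x) * w x) ∂μ =
      ENNReal.ofReal (K * b ^ (-s)) := fun b hb => by
    rw [← hval b hb, ofReal_integral_eq_lintegral_ofReal (hint b hb)
      (Eventually.of_forall fun x => mul_nonneg (exp_pos _).le (hw0 x))]
  rw [integral_eq_lintegral_of_nonneg_ae
      (Eventually.of_forall fun x => mul_nonneg (rpow_nonneg (by linarith [hq0 x]) _) (hw0 x))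
      (by fun_prop),
    lintegral_one_add_rpow_neg_mul_of_lintegral_exp_neg_mul hq hw hq0 hK hβ hsβ hexp,
    ENNReal.toReal_ofReal]
  exact mul_nonneg hK (div_nonneg (Gamma_nonneg_of_nonneg (by linarith))
    (Gamma_pos_of_pos hβ).le)

end Subordination

/-- `Π(A) ^ (D / 2)`, the value of `∫_{ℝ^n_A} e^{-|x|²} x^A dx`. -/
def monGaussianConst {ι : Type*} [Fintype ι] (A : ι → ℝ) : ℝ :=
  (∏ i, Gamma ((A i + 1) / 2)) / 2 ^ monK A

section MonomialWeight

variable {ι : Type*} [Fintype ι] {A : ι → ℝ}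

lemma monDim_nonneg (hA : ∀ i, 0 ≤ A i) : 0 ≤ monDim A :=
  add_nonneg (Nat.cast_nonneg _) (Finset.sum_nonneg fun i _ => hA i)

lemma monGaussianConst_nonneg (hA : ∀ i, 0 ≤ A i) : 0 ≤ monGaussianConst A :=
  div_nonneg (Finset.prod_nonneg fun i _ => Gamma_nonneg_of_nonneg (by linarith [hA i]))
    (by positivity)

lemma monWeight_nonneg (x : EuclideanSpace ℝ ι) : 0 ≤ monWeight A x :=
  Finset.prod_nonneg fun _ _ => rpow_nonneg (abs_nonneg _) _

lemma measurable_monWeight : Measurable (monWeight A) := by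
  unfold monWeight
  fun_prop

lemma volume_restrict_monSet :
    volume.restrict (monSet A) =
      (Measure.pi fun i => volume.restrict {t : ℝ | 0 < A i → 0 < t}).map
        (MeasurableEquiv.toLp 2 (ι → ℝ)) := by
  rw [← (EuclideanSpace.volume_preserving_symm_measurableEquiv_toLp ι).symm.map_eq,
    MeasurableEquiv.symm_symm,
    (MeasurableEquiv.toLp 2 (ι → ℝ)).measurableEmbedding.restrict_map, volume_pi,
    ← Measure.restrict_pi_pi]
  congr 2
  ext
  simp [monSet]

lemma exp_neg_mul_norm_sq_mul_monWeight (b : ℝ) (x : EuclideanSpace ℝ ι) :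
    exp (-b * ‖x‖ ^ 2) * monWeight A x = ∏ i, exp (-b * x i ^ 2) * |x i| ^ A i := by
  rw [monWeight, EuclideanSpace.real_norm_sq_eq, Finset.mul_sum, exp_sum,
    ← Finset.prod_mul_distrib]

lemma integrableOn_and_integral_monSet_exp_neg_mul_norm_sq (hA : ∀ i, 0 ≤ A i) {b : ℝ}
    (hb : 0 < b) :
    IntegrableOn (fun x => exp (-b * ‖x‖ ^ 2) * monWeight A x) (monSet A) ∧
      ∫ x in monSet A, exp (-b * ‖x‖ ^ 2) * monWeight A x =
        monGaussianConst A * b ^ (-(monDim A / 2)) := by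
  have h1 := fun i => integrableOn_and_integral_exp_neg_mul_sq_mul_abs_rpow (hA i) hb
  simp_rw [IntegrableOn, volume_restrict_monSet, integrable_map_equiv, integral_map_equiv,
    Function.comp_def, exp_neg_mul_norm_sq_mul_monWeight]
  refine ⟨Integrable.fintype_prod fun i => (h1 i).1, ?_⟩
  simp only [MeasurableEquiv.coe_toLp, WithLp.ofLp_toLp]
  rw [integral_fintype_prod_eq_prod (fun i t => exp (-b * t ^ 2) * |t| ^ A i)]
  simp only [(h1 _).2]
  have hsum : ∑ i, -((A i + 1) / 2) = -(monDim A / 2) := by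
    rw [Finset.sum_neg_distrib, ← Finset.sum_div, Finset.sum_add_distrib, monDim]
    simp [add_comm]
  have hcard : ∏ i, (if 0 < A i then (2 : ℝ) else 1) = 2 ^ monK A := by
    rw [Finset.prod_ite, Finset.prod_const, Finset.prod_const_one, mul_one, monK,
      Nat.card_eq_fintype_card, Fintype.card_subtype]
  rw [Finset.prod_div_distrib, Finset.prod_mul_distrib, ← rpow_sum_of_pos hb, hsum, hcard,
    monGaussianConst, div_mul_eq_mul_div]

lemma monPi_eq (A : ι → ℝ) :
    monPi A = monGaussianConst A ^ (2 / monDim A) := rfl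

lemma monPi_div_rpow (hA : ∀ i, 0 ≤ A i) {σ : ℝ} (hσ : 0 ≤ σ) :
    (monPi A / σ) ^ (monDim A / 2) = monGaussianConst A * σ ^ (-(monDim A / 2)) := by
  rcases (monDim_nonneg hA).lt_or_eq with hD | hD
  · rw [monPi_eq, div_rpow (rpow_nonneg (monGaussianConst_nonneg hA) _) hσ,
      ← rpow_mul (monGaussianConst_nonneg hA),
      div_mul_div_cancel₀' two_ne_zero, div_self hD.ne', rpow_one, rpow_neg hσ, div_eq_mul_inv]
  · have hcard : Fintype.card ι = 0 := by
      have := Finset.sum_nonneg fun i (_ : i ∈ Finset.univ) => hA i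
      rw [monDim] at hD
      exact_mod_cast (by linarith : (Fintype.card ι : ℝ) ≤ 0).antisymm (Nat.cast_nonneg _)
    have : IsEmpty ι := Fintype.card_eq_zero_iff.mp hcard
    simp [monPi_eq, monGaussianConst, monK, ← hD]

end MonomialWeight

theorem integral_cauchy_monomial_weight_general {n : ℕ} (A : Fin n → ℝ)
    (hA : ∀ i, 0 ≤ A i) (σ : ℝ) (hσ : 0 < σ) (β : ℝ) (hβ : monDim A / 2 < β) :
    ∫ x in monSet A, (1 + σ * ‖x‖ ^ 2) ^ (-β) * monWeight A x =
      (monPi A / σ) ^ (monDim A / 2) * (Gamma (β - monDim A / 2) / Gamma β) := by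
  have hgauss (b : ℝ) (hb : 0 < b) :=
    integrableOn_and_integral_monSet_exp_neg_mul_norm_sq hA (mul_pos hb hσ)
  have hmul (b : ℝ) (x : EuclideanSpace ℝ (Fin n)) :
      exp (-b * (σ * ‖x‖ ^ 2)) * monWeight A x = exp (-(b * σ) * ‖x‖ ^ 2) * monWeight A x := by
    ring_nf
  rw [monPi_div_rpow hA hσ.le]
  refine integral_one_add_rpow_neg_mul_of_integral_exp_neg_mul (by fun_prop)
    measurable_monWeight (fun x => by positivity) monWeight_nonneg
    (by linarith [monDim_nonneg hA]) hβ (fun b hb => ?_) (fun b hb => ?_)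
  · simp_rw [hmul]
    exact (hgauss b hb).1
  · rw [funext (hmul b), (hgauss b hb).2, mul_rpow hb.le hσ.le]
    ring

/-- `∫_{ℝ^n_A} (1+σ|x|²)^{-β} x^A dx = (Π(A)/σ)^{D/2} Γ(β-D/2)/Γ(β)`. -/
theorem integral_cauchy_monomial_weight {n : ℕ} (hn : 0 < n) (A : Fin n → ℝ)
    (hA : ∀ i, 0 ≤ A i) (σ : ℝ) (hσ : 0 < σ) (β : ℝ) (hβ : monDim A / 2 < β) :
    ∫ x in monSet A, (1 + σ * ‖x‖ ^ 2) ^ (-β) * monWeight A x =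
      (monPi A / σ) ^ (monDim A / 2) * (Gamma (β - monDim A / 2) / Gamma β) :=
  integral_cauchy_monomial_weight_general A hA σ hσ β hβ
end
end
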